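/- arXiv:2111.10330 — 4 statements merged into one kernel-verified Lean document; each statement's English description precedes it below -/
import Mathlib

section
/- Let X be a measurable space, V_w a measurable space with probability measure P_w, and f : X × V_w → X a measurable map. Let X_in and X_u be measurable subsets of X, H a natural number, and let B : X → ℝ be a measurable function, λ > 1 and c ≥ 0 constants such that: B(x) ≥ 0 for all x ∈ X; B(x) ≤ 1 for all x ∈ X_in; B(x) ≥ λ for all x ∈ X_u; for every x ∈ X the map w ↦ B(f(x,w)) is integrable with respect to P_w and ∫ B(f(x,w)) dP_w(w) ≤ B(x) + c. Then for every initial state x0 ∈ X_in, the probability, with respect to the product measure P_w^H on noise sequences (w_0, …, w_{H−1}), that the trajectory defined by x(0) = x0, x(t+1) = f(x(t), w_t) satisfies x(t) ∉ X_u for all 0 ≤ t ≤ H, is at least 1 − (1 + c·H)/λ. -/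
open MeasureTheory
set_option linter.unusedSectionVars false

/-- Trajectory of a discrete-time stochastic system driven by a finite noise sequence
`w : Fin H → V`: `x(0) = x0`, `x(t+1) = f (x t) (w t)` for `t < H` (and constant afterwards). -/
noncomputable def traj {X V : Type*} (f : X → V → X) (x0 : X) {H : ℕ} (w : Fin H → V) :
    ℕ → X
  | 0 => x0
  | t + 1 => if h : t < H then f (traj f x0 w t) (w ⟨t, h⟩) else traj f x0 w t

open scoped Classical in
/-- Stopped barrier process: `B` evaluated at the trajectory stopped at the first hit of `Xu`. -/
noncomputable def gfun {X V : Type*} (f : X → V → X) (Xu : Set X) (B : X → ℝ) (x0 : X) {H : ℕ}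
    (w : Fin H → V) : ℕ → ℝ
  | 0 => B x0
  | t + 1 => if ∃ s ≤ t, traj f x0 w s ∈ Xu then gfun f Xu B x0 w t
             else B (traj f x0 w (t + 1))

section Aux

variable {X V : Type*} (f : X → V → X) (Xu : Set X) (B : X → ℝ) (x0 : X) {H : ℕ}

lemma traj_congr (w w' : Fin H → V) (t : ℕ)
    (h : ∀ j : Fin H, (j : ℕ) < t → w j = w' j) :
    traj f x0 w t = traj f x0 w' t := by
  induction t with
  | zero => rfl
  | succ t ih =>
    have ih' := ih (fun j hj => h j (Nat.lt_succ_of_lt hj))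
    by_cases hH : t < H
    · simp only [traj, hH, dif_pos, ih', h ⟨t, hH⟩ (Nat.lt_succ_self t)]
    · simp only [traj, hH, dif_neg, ih', not_false_iff]

lemma gfun_congr (w w' : Fin H → V) (t : ℕ)
    (h : ∀ j : Fin H, (j : ℕ) < t → w j = w' j) :
    gfun f Xu B x0 w t = gfun f Xu B x0 w' t := by
  induction t with
  | zero => rfl
  | succ t ih =>
    have ih' := ih (fun j hj => h j (Nat.lt_succ_of_lt hj))
    have htr : ∀ s ≤ t + 1, traj f x0 w s = traj f x0 w' s := fun s hs =>
      traj_congr f x0 w w' s (fun j hj => h j (lt_of_lt_of_le hj hs))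
    have hcond : (∃ s ≤ t, traj f x0 w s ∈ Xu) ↔ (∃ s ≤ t, traj f x0 w' s ∈ Xu) := by
      constructor
      · rintro ⟨s, hs, hmem⟩; exact ⟨s, hs, (htr s (hs.trans t.le_succ)) ▸ hmem⟩
      · rintro ⟨s, hs, hmem⟩; exact ⟨s, hs, (htr s (hs.trans t.le_succ)) ▸ hmem⟩
    simp only [gfun]
    by_cases hc : ∃ s ≤ t, traj f x0 w s ∈ Xu
    · rw [if_pos hc, if_pos (hcond.mp hc), ih']
    · rw [if_neg hc, if_neg (fun hc' => hc (hcond.mpr hc')), htr (t+1) le_rfl]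

variable [MeasurableSpace X] [MeasurableSpace V]

lemma measurable_traj (hf : Measurable (Function.uncurry f)) (t : ℕ) :
    Measurable fun w : Fin H → V => traj f x0 w t := by
  induction t with
  | zero => exact measurable_const
  | succ t ih =>
    by_cases hH : t < H
    · have : (fun w : Fin H → V => traj f x0 w (t+1)) =
        (fun w => Function.uncurry f (traj f x0 w t, w ⟨t, hH⟩)) := by
        funext w; simp [traj, hH, Function.uncurry]
      rw [this]
      exact hf.comp (ih.prodMk (measurable_pi_apply _))
    · have : (fun w : Fin H → V => traj f x0 w (t+1)) =
        (fun w => traj f x0 w t) := by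
        funext w; simp [traj, hH]
      rw [this]; exact ih

lemma measurable_hitset (hf : Measurable (Function.uncurry f)) (hXu : MeasurableSet Xu) (t : ℕ) :
    MeasurableSet {w : Fin H → V | ∃ s ≤ t, traj f x0 w s ∈ Xu} := by
  have : {w : Fin H → V | ∃ s ≤ t, traj f x0 w s ∈ Xu} =
      ⋃ s ∈ Set.Iic t, {w : Fin H → V | traj f x0 w s ∈ Xu} := by
    ext w; simp [Set.mem_Iic]
  rw [this]
  exact MeasurableSet.biUnion (Set.to_countable _)
    (fun s _ => (measurable_traj f x0 hf s) hXu)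

lemma measurable_gfun (hf : Measurable (Function.uncurry f)) (hB : Measurable B)
    (hXu : MeasurableSet Xu) (t : ℕ) :
    Measurable fun w : Fin H → V => gfun f Xu B x0 w t := by
  induction t with
  | zero => exact measurable_const
  | succ t ih =>
    classical
    have : (fun w : Fin H → V => gfun f Xu B x0 w (t+1)) = fun w =>
        if w ∈ {w : Fin H → V | ∃ s ≤ t, traj f x0 w s ∈ Xu} then gfun f Xu B x0 w t
        else B (traj f x0 w (t+1)) := by
      funext w
      simp only [gfun, Set.mem_setOf_eq]
    rw [this]
    exact Measurable.ite (measurable_hitset f Xu x0 hf hXu t) ih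
      (hB.comp (measurable_traj f x0 hf (t+1)))

lemma gfun_nonneg (hB0 : ∀ x, 0 ≤ B x) (w : Fin H → V) (t : ℕ) :
    0 ≤ gfun f Xu B x0 w t := by
  induction t with
  | zero => exact hB0 x0
  | succ t ih =>
    simp only [gfun]
    split
    · exact ih
    · exact hB0 _

lemma le_gfun_of_hit {lam : ℝ} (hB2 : ∀ x ∈ Xu, lam ≤ B x) (w : Fin H → V) (t : ℕ)
    (h : ∃ s ≤ t, traj f x0 w s ∈ Xu) : lam ≤ gfun f Xu B x0 w t := by
  induction t with
  | zero =>
    obtain ⟨s, hs, hmem⟩ := h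
    interval_cases s
    exact hB2 _ hmem
  | succ t ih =>
    simp only [gfun]
    by_cases hc : ∃ s ≤ t, traj f x0 w s ∈ Xu
    · rw [if_pos hc]; exact ih hc
    · rw [if_neg hc]
      obtain ⟨s, hs, hmem⟩ := h
      have hst : ¬ s ≤ t := fun hle => hc ⟨s, hle, hmem⟩
      have : s = t + 1 := by omega
      subst this
      exact hB2 _ hmem

lemma gfun_eq_of_not_hit (w : Fin H → V) (t : ℕ)
    (h : ¬ ∃ s ≤ t, traj f x0 w s ∈ Xu) :
    gfun f Xu B x0 w t = B (traj f x0 w t) := by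
  cases t with
  | zero => rfl
  | succ t =>
    have hc : ¬ ∃ s ≤ t, traj f x0 w s ∈ Xu := fun ⟨s, hs, hm⟩ => h ⟨s, hs.trans t.le_succ, hm⟩
    simp only [gfun, if_neg hc]

end Aux

section Main

variable {X V : Type*} [MeasurableSpace X] [MeasurableSpace V]

lemma key_step (Pw : Measure V) [IsProbabilityMeasure Pw]
    (f : X → V → X) (hf : Measurable (Function.uncurry f))
    (Xu : Set X) (hXu : MeasurableSet Xu)
    {H : ℕ} (B : X → ℝ) (hB : Measurable B) (c : ℝ) (hc : 0 ≤ c)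
    (hB0 : ∀ x, 0 ≤ B x)
    (hInt : ∀ x, Integrable (fun w => B (f x w)) Pw)
    (hB3 : ∀ x, ∫ w, B (f x w) ∂Pw ≤ B x + c)
    (x0 : X) {t : ℕ} (ht : t < H) :
    ∫⁻ w, ENNReal.ofReal (gfun f Xu B x0 w (t+1)) ∂(Measure.pi fun _ : Fin H => Pw) ≤
      (∫⁻ w, ENNReal.ofReal (gfun f Xu B x0 w t) ∂(Measure.pi fun _ : Fin H => Pw)) +
        ENNReal.ofReal c := by
  obtain ⟨n, rfl⟩ : ∃ n, H = n + 1 := ⟨H - 1, by omega⟩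
  have hne : Nonempty V := by
    by_contra h
    rw [not_nonempty_iff] at h
    have h1 : Pw Set.univ = 1 := measure_univ
    rw [Set.univ_eq_empty_iff.mpr h, measure_empty] at h1
    exact zero_ne_one h1
  obtain ⟨v₀⟩ := hne
  set i : Fin (n + 1) := ⟨t, ht⟩ with hi
  set e := MeasurableEquiv.piFinSuccAbove (fun _ : Fin (n+1) => V) i with he
  set ins : V → (Fin n → V) → (Fin (n+1) → V) :=
    fun v rest => Fin.insertNth (α := fun _ => V) i v rest with hinsdef
  have hins : ∀ (v : V) (rest : Fin n → V), e.symm (v, rest) = ins v rest :=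
    fun _ _ => rfl
  have mp := (measurePreserving_piFinSuccAbove (fun _ : Fin (n+1) => Pw) i).symm e
  set ν := Measure.pi fun _ : Fin n => Pw with hν
  have hFmeas : ∀ u : ℕ, Measurable fun w : Fin (n+1) → V =>
      ENNReal.ofReal (gfun f Xu B x0 w u) :=
    fun u => ENNReal.measurable_ofReal.comp (measurable_gfun f Xu B x0 hf hB hXu u)
  have hsplit : ∀ u : ℕ,
      ∫⁻ w, ENNReal.ofReal (gfun f Xu B x0 w u) ∂(Measure.pi fun _ : Fin (n+1) => Pw) =
      ∫⁻ rest, ∫⁻ v, ENNReal.ofReal (gfun f Xu B x0 (ins v rest) u) ∂Pw ∂ν := by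
    intro u
    rw [← mp.lintegral_comp (hFmeas u)]
    rw [lintegral_prod_symm (fun p : V × (Fin n → V) => ENNReal.ofReal (gfun f Xu B x0 (e.symm p) u))
      (((hFmeas u).comp e.symm.measurable).aemeasurable)]
    simp only [hins]
  rw [hsplit t, hsplit (t+1)]
  -- pointwise bound in `rest`
  have hpt : ∀ rest : Fin n → V,
      ∫⁻ v, ENNReal.ofReal (gfun f Xu B x0 (ins v rest) (t+1)) ∂Pw ≤
      (∫⁻ v, ENNReal.ofReal (gfun f Xu B x0 (ins v rest) t) ∂Pw) +
        ENNReal.ofReal c := by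
    intro rest
    set w₀ := ins v₀ rest with hw₀
    have hcoord : ∀ (v : V) (j : Fin (n+1)), (j : ℕ) < t →
        ins v rest j = w₀ j := by
      intro v j hj
      have hji : j ≠ i := Fin.ne_of_val_ne (by simpa using hj.ne)
      obtain ⟨k, hk⟩ := Fin.exists_succAbove_eq hji
      simp only [hinsdef, hw₀, ← hk, Fin.insertNth_apply_succAbove]
    have htraj : ∀ (v : V), ∀ s ≤ t, traj f x0 (ins v rest) s = traj f x0 w₀ s :=
      fun v s hs => traj_congr f x0 _ _ s (fun j hj => hcoord v j (lt_of_lt_of_le hj hs))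
    have hg : ∀ v : V, gfun f Xu B x0 (ins v rest) t = gfun f Xu B x0 w₀ t :=
      fun v => gfun_congr f Xu B x0 _ _ t (fun j hj => hcoord v j hj)
    have hhit : ∀ v : V,
        (∃ s ≤ t, traj f x0 (ins v rest) s ∈ Xu) ↔ (∃ s ≤ t, traj f x0 w₀ s ∈ Xu) := by
      intro v
      constructor
      · rintro ⟨s, hs, hm⟩; exact ⟨s, hs, htraj v s hs ▸ hm⟩
      · rintro ⟨s, hs, hm⟩; exact ⟨s, hs, (htraj v s hs).symm ▸ hm⟩
    have hRHS : ∫⁻ v, ENNReal.ofReal (gfun f Xu B x0 (ins v rest) t) ∂Pw =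
        ENNReal.ofReal (gfun f Xu B x0 w₀ t) := by
      simp only [hg]
      rw [lintegral_const, measure_univ, mul_one]
    rw [hRHS]
    by_cases hc0 : ∃ s ≤ t, traj f x0 w₀ s ∈ Xu
    · have : ∀ v : V, gfun f Xu B x0 (ins v rest) (t+1) = gfun f Xu B x0 w₀ t := by
        intro v
        classical
        rw [show gfun f Xu B x0 (ins v rest) (t+1) =
          if ∃ s ≤ t, traj f x0 (ins v rest) s ∈ Xu then
            gfun f Xu B x0 (ins v rest) t
          else B (traj f x0 (ins v rest) (t+1)) from rfl]
        rw [if_pos ((hhit v).mpr hc0), hg v]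
      simp only [this]
      rw [lintegral_const, measure_univ, mul_one]
      exact le_self_add
    · set xt := traj f x0 w₀ t with hxt
      have hval : ∀ v : V, gfun f Xu B x0 (ins v rest) (t+1) = B (f xt v) := by
        intro v
        classical
        rw [show gfun f Xu B x0 (ins v rest) (t+1) =
          if ∃ s ≤ t, traj f x0 (ins v rest) s ∈ Xu then
            gfun f Xu B x0 (ins v rest) t
          else B (traj f x0 (ins v rest) (t+1)) from rfl]
        rw [if_neg (fun hcon => hc0 ((hhit v).mp hcon))]
        have htt : traj f x0 (ins v rest) (t+1) = f xt v := by
          simp only [traj, ht, dif_pos]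
          rw [htraj v t le_rfl, hxt]
          congr 1
          simp only [hinsdef]
          rw [show (⟨t, ht⟩ : Fin (n+1)) = i from rfl, Fin.insertNth_apply_same]
        rw [htt]
      simp only [hval]
      have := ofReal_integral_eq_lintegral_ofReal (hInt xt)
        (Filter.Eventually.of_forall fun v => hB0 (f xt v))
      rw [← this]
      have h1 : gfun f Xu B x0 w₀ t = B xt := gfun_eq_of_not_hit f Xu B x0 w₀ t hc0
      rw [h1, ← ENNReal.ofReal_add (hB0 xt) hc]
      exact ENNReal.ofReal_le_ofReal (hB3 xt)
  calc ∫⁻ rest, ∫⁻ v, ENNReal.ofReal (gfun f Xu B x0 (ins v rest) (t+1)) ∂Pw ∂ν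
      ≤ ∫⁻ rest, ((∫⁻ v, ENNReal.ofReal (gfun f Xu B x0 (ins v rest) t) ∂Pw) +
          ENNReal.ofReal c) ∂ν := lintegral_mono hpt
    _ = (∫⁻ rest, ∫⁻ v, ENNReal.ofReal (gfun f Xu B x0 (ins v rest) t) ∂Pw ∂ν) +
          ENNReal.ofReal c := by
        rw [lintegral_add_right _ measurable_const, lintegral_const, measure_univ, mul_one]

lemma gfun_lintegral_le (Pw : Measure V) [IsProbabilityMeasure Pw]
    (f : X → V → X) (hf : Measurable (Function.uncurry f))
    (Xu : Set X) (hXu : MeasurableSet Xu)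
    {H : ℕ} (B : X → ℝ) (hB : Measurable B) (c : ℝ) (hc : 0 ≤ c)
    (hB0 : ∀ x, 0 ≤ B x)
    (hInt : ∀ x, Integrable (fun w => B (f x w)) Pw)
    (hB3 : ∀ x, ∫ w, B (f x w) ∂Pw ≤ B x + c)
    (x0 : X) (t : ℕ) (ht : t ≤ H) :
    ∫⁻ w, ENNReal.ofReal (gfun f Xu B x0 w t) ∂(Measure.pi fun _ : Fin H => Pw) ≤
      ENNReal.ofReal (B x0) + t * ENNReal.ofReal c := by
  induction t with
  | zero =>
    rw [show (fun w : Fin H → V => ENNReal.ofReal (gfun f Xu B x0 w 0)) =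
      fun _ => ENNReal.ofReal (B x0) from rfl]
    rw [lintegral_const, measure_univ, mul_one]
    simp
  | succ t ih =>
    have h1 := key_step Pw f hf Xu hXu B hB c hc hB0 hInt hB3 x0 (lt_of_lt_of_le t.lt_succ_self ht)
    refine h1.trans ?_
    have h2 := add_le_add_left (ih (le_of_lt (lt_of_lt_of_le t.lt_succ_self ht))) (ENNReal.ofReal c)
    refine h2.trans ?_
    rw [Nat.cast_succ, add_mul, one_mul, add_assoc]

end Main

/-- Barrier-certificate safety bound for a discrete-time stochastic system:
if `B ≥ 0` on `X`, `B ≤ 1` on `X_in`, `B ≥ λ` on `X_u`, and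
`∫ B(f(x,w)) dP_w ≤ B x + c` for all `x`, then for every `x0 ∈ X_in` the probability
(w.r.t. the product noise measure `P_w^H`) that the trajectory avoids `X_u` up to time `H`
is at least `1 - (1 + c·H)/λ`. -/
theorem barrier_safety {X V : Type*} [MeasurableSpace X] [MeasurableSpace V]
    (Pw : Measure V) [IsProbabilityMeasure Pw]
    (f : X → V → X) (hf : Measurable (Function.uncurry f))
    (Xin Xu : Set X) (hXin : MeasurableSet Xin) (hXu : MeasurableSet Xu)
    (H : ℕ) (B : X → ℝ) (hB : Measurable B)
    (lam c : ℝ) (hlam : 1 < lam) (hc : 0 ≤ c)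
    (hB0 : ∀ x, 0 ≤ B x)
    (hB1 : ∀ x ∈ Xin, B x ≤ 1)
    (hB2 : ∀ x ∈ Xu, lam ≤ B x)
    (hInt : ∀ x, Integrable (fun w => B (f x w)) Pw)
    (hB3 : ∀ x, ∫ w, B (f x w) ∂Pw ≤ B x + c) :
    ∀ x0 ∈ Xin,
      ENNReal.ofReal (1 - (1 + c * H) / lam) ≤
        Measure.pi (fun _ : Fin H => Pw) {w | ∀ t ≤ H, traj f x0 w t ∉ Xu} := by
  intro x0 hx0
  set μ := Measure.pi (fun _ : Fin H => Pw) with hμ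
  set A := {w : Fin H → V | ∃ s ≤ H, traj f x0 w s ∈ Xu} with hA
  have hAm : MeasurableSet A := measurable_hitset f Xu x0 hf hXu H
  have hcompl : {w : Fin H → V | ∀ t ≤ H, traj f x0 w t ∉ Xu} = Aᶜ := by
    ext w
    simp only [hA, Set.mem_setOf_eq, Set.mem_compl_iff, not_exists, not_and]
  have hlam0 : (0:ℝ) < lam := lt_trans one_pos hlam
  -- Markov-type bound
  have hMarkov : ENNReal.ofReal lam * μ A ≤
      ∫⁻ w, ENNReal.ofReal (gfun f Xu B x0 w H) ∂μ := by
    have hsub : A ⊆ {w : Fin H → V |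
        ENNReal.ofReal lam ≤ ENNReal.ofReal (gfun f Xu B x0 w H)} := by
      intro w hw
      exact ENNReal.ofReal_le_ofReal (le_gfun_of_hit f Xu B x0 hB2 w H hw)
    calc ENNReal.ofReal lam * μ A
        ≤ ENNReal.ofReal lam * μ {w | ENNReal.ofReal lam ≤
            ENNReal.ofReal (gfun f Xu B x0 w H)} := by
          exact mul_le_mul_right (measure_mono hsub) _
      _ ≤ ∫⁻ w, ENNReal.ofReal (gfun f Xu B x0 w H) ∂μ :=
          mul_meas_ge_le_lintegral₀
            ((ENNReal.measurable_ofReal.comp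
              (measurable_gfun f Xu B x0 hf hB hXu H)).aemeasurable) _
  have hbound : ∫⁻ w, ENNReal.ofReal (gfun f Xu B x0 w H) ∂μ ≤
      ENNReal.ofReal (1 + c * H) := by
    refine (gfun_lintegral_le Pw f hf Xu hXu B hB c hc hB0 hInt hB3 x0 H le_rfl).trans ?_
    have h1 : ENNReal.ofReal (B x0) ≤ ENNReal.ofReal 1 :=
      ENNReal.ofReal_le_ofReal (hB1 x0 hx0)
    have h2 : ENNReal.ofReal (1 + c * H) = ENNReal.ofReal 1 + (H : ENNReal) * ENNReal.ofReal c := by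
      rw [ENNReal.ofReal_add zero_le_one (by positivity), ENNReal.ofReal_mul hc]
      rw [ENNReal.ofReal_natCast, mul_comm]
    rw [h2]
    exact add_le_add_left h1 _
  have hAle : μ A ≤ ENNReal.ofReal ((1 + c * H) / lam) := by
    rw [ENNReal.ofReal_div_of_pos hlam0]
    rw [ENNReal.le_div_iff_mul_le
      (Or.inl (ne_of_gt (ENNReal.ofReal_pos.mpr hlam0))) (Or.inl ENNReal.ofReal_ne_top)]
    rw [mul_comm]
    exact hMarkov.trans hbound
  rw [hcompl, measure_compl hAm (measure_ne_top μ A), measure_univ]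
  have hge : (0:ℝ) ≤ (1 + c * H) / lam := by positivity
  rw [ENNReal.ofReal_sub _ hge, ENNReal.ofReal_one]
  exact tsub_le_tsub_left hAle 1
end

section
/- Let (Ω, 𝓕, μ) be a probability space with a filtration (𝓕_t)_{t∈ℕ}, and let M : ℕ → Ω → ℝ be a process adapted to (𝓕_t) such that each M_t is integrable, M_t(ω) ≥ 0 for all t and ω, and for some constant c ≥ 0 the conditional expectation satisfies E[M_{t+1} | 𝓕_t] ≤ M_t + c almost everywhere for every t ∈ ℕ. Then for every λ > 0 and every horizon H ∈ ℕ, μ{ω : ∃ t with 0 ≤ t ≤ H and M_t(ω) ≥ λ} ≤ (E[M_0] + c·H)/λ. -/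
open MeasureTheory

/-- Maximal inequality for nonnegative `c`-supermartingales (Kushner's inequality):
if `M` is adapted, integrable, nonnegative and `E[M_{t+1} | 𝓕_t] ≤ M_t + c` a.e. for all `t`,
then for every `λ > 0` and horizon `H`,
`μ{∃ t ≤ H, M_t ≥ λ} ≤ (E[M_0] + c·H)/λ`. -/
theorem kushner_maximal_inequality {Ω : Type*} {m0 : MeasurableSpace Ω}
    (μ : Measure Ω) [IsProbabilityMeasure μ]
    (𝓕 : Filtration ℕ m0) (M : ℕ → Ω → ℝ)
    (hAdapted : Adapted 𝓕 M)
    (hInt : ∀ t, Integrable (M t) μ)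
    (hNonneg : ∀ t ω, 0 ≤ M t ω)
    (c : ℝ) (hc : 0 ≤ c)
    (hSuper : ∀ t : ℕ, μ[M (t + 1)|𝓕 t] ≤ᵐ[μ] fun ω => M t ω + c)
    (lam : ℝ) (hlam : 0 < lam) (H : ℕ) :
    μ {ω | ∃ t, t ≤ H ∧ lam ≤ M t ω} ≤
      ENNReal.ofReal (((∫ ω, M 0 ω ∂μ) + c * H) / lam) := by
  classical
  set S : Set Ω := {ω | ∃ t, t ≤ H ∧ lam ≤ M t ω} with hSdef
  have hmeas : ∀ t, Measurable (M t) := fun t =>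
    (hAdapted t).le (𝓕.le t)
  have hSm : MeasurableSet S := by
    have : S = ⋃ t, ⋃ _ : t ≤ H, {ω | lam ≤ M t ω} := by
      ext ω; simp [hSdef, Set.mem_iUnion]
    rw [this]
    exact MeasurableSet.iUnion fun t => MeasurableSet.iUnion fun _ =>
      measurableSet_le measurable_const (hmeas t)
  -- the shifted process `f t = c t - M t` is a submartingale
  set f : ℕ → Ω → ℝ := fun t ω => c * t - M t ω with hfdef
  have hfInt : ∀ t, Integrable (f t) μ := fun t =>
    (integrable_const (c * (t : ℝ))).sub (hInt t)
  have hfAdapted : StronglyAdapted 𝓕 f := fun t =>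
    stronglyMeasurable_const.sub (hAdapted.stronglyAdapted t)
  have hsub : Submartingale f 𝓕 μ := by
    refine submartingale_nat hfAdapted hfInt fun t => ?_
    have e1 : f (t + 1) = (fun _ => c * ((t + 1 : ℕ) : ℝ)) - M (t + 1) := rfl
    have hs := condExp_sub (μ := μ) (m := 𝓕 t)
      (integrable_const (c * ((t + 1 : ℕ) : ℝ))) (hInt (t + 1))
    rw [← e1, condExp_const (𝓕.le t)] at hs
    filter_upwards [hs, hSuper t] with ω h1ω h2ω
    rw [h1ω]
    simp only [hfdef, Pi.sub_apply]
    push_cast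
    have h2 : (μ[M (t + 1)|𝓕 t]) ω ≤ M t ω + c := h2ω
    nlinarith
  -- hitting time
  set τ : Ω → ℕ := hittingBtwn M {y : ℝ | lam ≤ y} 0 H with hτdef
  set τ' : Ω → WithTop ℕ := fun ω => (τ ω : WithTop ℕ) with hτ'def
  have hτst : IsStoppingTime 𝓕 τ' :=
    hAdapted.isStoppingTime_hittingBtwn measurableSet_Ici
  have hτle : ∀ ω, τ ω ≤ H := fun ω => hittingBtwn_le ω
  -- optional stopping for the submartingale
  have hOS : ∫ ω, stoppedValue f (fun _ => 0) ω ∂μ ≤ ∫ ω, stoppedValue f τ' ω ∂μ :=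
    hsub.expected_stoppedValue_mono (isStoppingTime_const 𝓕 0) hτst
      (fun ω => WithTop.coe_le_coe.2 (Nat.zero_le (τ ω))) (fun ω => WithTop.coe_le_coe.2 (hτle ω))
  have hMτInt : Integrable (stoppedValue M τ') μ :=
    integrable_stoppedValue ℕ hτst hInt (fun ω => WithTop.coe_le_coe.2 (hτle ω))
  have hfτInt : Integrable (stoppedValue f τ') μ :=
    hsub.integrable_stoppedValue hτst (fun ω => WithTop.coe_le_coe.2 (hτle ω))
  -- E[stoppedValue M τ] ≤ E[M 0] + c H
  have hcτInt : Integrable (fun ω => c * (τ ω : ℝ)) μ := by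
    have : (fun ω => c * (τ ω : ℝ)) = fun ω => stoppedValue f τ' ω + stoppedValue M τ' ω := by
      funext ω; simp [stoppedValue, hfdef]; exact Or.inl rfl
    rw [this]
    exact hfτInt.add hMτInt
  have hkey : ∫ ω, stoppedValue M τ' ω ∂μ ≤ (∫ ω, M 0 ω ∂μ) + c * H := by
    have h0 : ∫ ω, stoppedValue f (fun _ => 0) ω ∂μ = -∫ ω, M 0 ω ∂μ := by
      simp [stoppedValue, hfdef, integral_neg]
    have hsplit : ∫ ω, stoppedValue f τ' ω ∂μ
        = (∫ ω, c * (τ ω : ℝ) ∂μ) - ∫ ω, stoppedValue M τ' ω ∂μ := by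
      rw [← integral_sub hcτInt hMτInt]
      congr 1
    have hcbound : ∫ ω, c * (τ ω : ℝ) ∂μ ≤ c * H := by
      have h' : ∫ ω, c * (τ ω : ℝ) ∂μ ≤ ∫ _ω, c * (H : ℝ) ∂μ := by
        refine integral_mono hcτInt (integrable_const _) fun ω => ?_
        exact mul_le_mul_of_nonneg_left (Nat.cast_le.2 (hτle ω)) hc
      simpa using h'
    rw [h0, hsplit] at hOS
    linarith
  -- lam * μ S ≤ E[stoppedValue M τ]
  have hge : ∀ ω ∈ S, lam ≤ stoppedValue M τ' ω := by
    rintro ω ⟨t, ht, hlt⟩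
    refine stoppedValue_hittingBtwn_mem ?_
    exact ⟨t, by simp [Set.mem_Icc, ht], hlt⟩
  have hlb : lam * (μ S).toReal ≤ ∫ ω in S, stoppedValue M τ' ω ∂μ :=
    by have := setIntegral_ge_of_const_le hSm (measure_ne_top _ _) hge hMτInt.integrableOn
       rwa [smul_eq_mul, mul_comm] at this
  have hset : ∫ ω in S, stoppedValue M τ' ω ∂μ ≤ ∫ ω, stoppedValue M τ' ω ∂μ := by
    refine setIntegral_le_integral hMτInt ?_
    filter_upwards with ω using hNonneg _ ω
  have htoReal : (μ S).toReal ≤ ((∫ ω, M 0 ω ∂μ) + c * H) / lam := by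
    rw [le_div_iff₀ hlam]
    calc (μ S).toReal * lam = lam * (μ S).toReal := mul_comm _ _
      _ ≤ _ := hlb
      _ ≤ _ := hset
      _ ≤ _ := hkey
  calc μ S = ENNReal.ofReal (μ S).toReal := (ENNReal.ofReal_toReal (measure_ne_top _ _)).symm
    _ ≤ _ := ENNReal.ofReal_le_ofReal htoReal
end

section
/- Let n, m ∈ ℕ, let P and P_1, …, P_m be symmetric real n×n matrices with Euclidean operator norms ‖P‖ and ‖P_ℓ‖, and let f_a : ℝⁿ × ℝᵐ → ℝⁿ be differentiable. Let ℒ_x, ℒ_u, L₁, L₂, L₃, L̂_x, L̂_u ≥ 0 and suppose that for all (x, u) with ‖x‖ ≤ ℒ_x and ‖u‖ ≤ ℒ_u: ‖f_a(x,u)‖ ≤ L₁‖x‖ + L₂‖u‖ + L₃, the partial Fréchet derivative of f_a in x has operator norm at most L̂_x, and the partial Fréchet derivative of f_a in u has operator norm at most L̂_u. Define 𝓛_x := 2‖P‖L̂_x(L₁ℒ_x + L₂ℒ_u + L₃) + 2ℒ_x‖P‖ + 2ℒ_x Σ_{ℓ=1}^m ‖P_ℓ‖ and 𝓛_u := 2‖P‖L̂_u(L₁ℒ_x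 + L₂ℒ_u + L₃) + √m. Then the function g(x,u) = ⟨f_a(x,u), P f_a(x,u)⟩ + Σ_{ℓ=1}^m (u_ℓ − ⟨x, P_ℓ x⟩) − ⟨x, P x⟩ satisfies |g(x,u) − g(x',u')| ≤ √(𝓛_x² + 𝓛_u²) · √(‖x − x'‖² + ‖u − u'‖²) for all (x,u), (x',u') with ‖x‖, ‖x'‖ ≤ ℒ_x and ‖u‖, ‖u'‖ ≤ ℒ_u; i.e., g is Lipschitz with constant at most √(𝓛_x² + 𝓛_u²) on the product of the two closed balls equipped with the Euclidean product norm. -/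
open RealInnerProductSpace

private lemma sym_quad_diff {n : ℕ} (T : EuclideanSpace ℝ (Fin n) →L[ℝ] EuclideanSpace ℝ (Fin n))
    (hT : ∀ v w, ⟪T v, w⟫ = ⟪v, T w⟫) (a b : EuclideanSpace ℝ (Fin n)) :
    ⟪a, T a⟫ - ⟪b, T b⟫ = ⟪a - b, T (a + b)⟫ := by
  have h1 : ⟪a, T b⟫ = ⟪b, T a⟫ := by rw [← hT, real_inner_comm]
  simp only [inner_sub_left, map_add, inner_add_right]
  linarith

private lemma clm_symm {n : ℕ} (P : Matrix (Fin n) (Fin n) ℝ) (hP : P.IsSymm)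
    (v w : EuclideanSpace ℝ (Fin n)) :
    ⟪(Matrix.toEuclideanCLM (𝕜 := ℝ) P) v, w⟫ = ⟪v, (Matrix.toEuclideanCLM (𝕜 := ℝ) P) w⟫ := by
  have hH : P.IsHermitian := hP
  have := (Matrix.isHermitian_iff_isSymmetric.mp hH) v w
  simpa [← Matrix.coe_toEuclideanCLM_eq_toEuclideanLin] using this

private lemma sum_abs_le {m : ℕ} (v : EuclideanSpace ℝ (Fin m)) :
    |∑ ℓ, v ℓ| ≤ Real.sqrt m * ‖v‖ := by
  set o : EuclideanSpace ℝ (Fin m) := WithLp.toLp 2 (fun _ => (1:ℝ)) with ho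
  have h1 : ⟪o, v⟫ = ∑ ℓ, v ℓ := by
    simp [PiLp.inner_apply, ho, RCLike.inner_apply]
  have h2 : ‖o‖ = Real.sqrt m := by
    simp [EuclideanSpace.norm_eq, ho]
  calc |∑ ℓ, v ℓ| = |⟪o, v⟫| := by rw [h1]
    _ ≤ ‖o‖ * ‖v‖ := abs_real_inner_le_norm o v
    _ = Real.sqrt m * ‖v‖ := by rw [h2]

private lemma quad_diff_bound {n : ℕ} (T : EuclideanSpace ℝ (Fin n) →L[ℝ] EuclideanSpace ℝ (Fin n))
    (hT : ∀ v w, ⟪T v, w⟫ = ⟪v, T w⟫) (a b : EuclideanSpace ℝ (Fin n)) (R D : ℝ)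
    (hRa : ‖a‖ ≤ R) (hRb : ‖b‖ ≤ R) (hD : ‖a - b‖ ≤ D) :
    |⟪a, T a⟫ - ⟪b, T b⟫| ≤ ‖T‖ * (2 * R) * D := by
  have hR : 0 ≤ R := le_trans (norm_nonneg a) hRa
  rw [sym_quad_diff T hT a b]
  calc |⟪a - b, T (a + b)⟫| ≤ ‖a - b‖ * ‖T (a + b)‖ := abs_real_inner_le_norm _ _
    _ ≤ ‖a - b‖ * (‖T‖ * ‖a + b‖) :=
        mul_le_mul_of_nonneg_left (T.le_opNorm _) (norm_nonneg _)
    _ ≤ D * (‖T‖ * (2 * R)) := by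
        have hab : ‖a + b‖ ≤ 2 * R := by
          calc ‖a + b‖ ≤ ‖a‖ + ‖b‖ := norm_add_le a b
            _ ≤ 2 * R := by linarith
        have h1 : ‖T‖ * ‖a + b‖ ≤ ‖T‖ * (2 * R) :=
          mul_le_mul_of_nonneg_left hab (norm_nonneg T)
        exact mul_le_mul hD h1 (by positivity) (le_trans (norm_nonneg _) hD)
    _ = ‖T‖ * (2 * R) * D := by ring

private lemma cs_aux (Lx Lu a b : ℝ) (hLx0 : 0 ≤ Lx) (hLu0 : 0 ≤ Lu)
    (ha0 : 0 ≤ a) (hb0 : 0 ≤ b) :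
    Lx * a + Lu * b ≤ Real.sqrt (Lx ^ 2 + Lu ^ 2) * Real.sqrt (a ^ 2 + b ^ 2) := by
  rw [← Real.sqrt_mul (by positivity)]
  rw [Real.le_sqrt (add_nonneg (mul_nonneg hLx0 ha0) (mul_nonneg hLu0 hb0)) (by positivity)]
  nlinarith [sq_nonneg (Lx * b - Lu * a)]

/-- Lipschitz constant of the control-barrier-decrease constraint
`g(x,u) = ⟨f_a(x,u), P f_a(x,u)⟩ + Σ_ℓ (u_ℓ - ⟨x, P_ℓ x⟩) - ⟨x, P x⟩`
on the product of the closed balls of radii `ℒ_x` and `ℒ_u`: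
`g` is Lipschitz with constant `√(𝓛_x² + 𝓛_u²)` for the Euclidean product norm, where
`𝓛_x = 2‖P‖L̂_x(L₁ℒ_x + L₂ℒ_u + L₃) + 2ℒ_x‖P‖ + 2ℒ_x Σ_ℓ ‖P_ℓ‖` and
`𝓛_u = 2‖P‖L̂_u(L₁ℒ_x + L₂ℒ_u + L₃) + √m`. -/
theorem lipschitz_control_barrier_decrease {n m : ℕ}
    (P : Matrix (Fin n) (Fin n) ℝ) (hP : P.IsSymm)
    (Pl : Fin m → Matrix (Fin n) (Fin n) ℝ) (hPl : ∀ ℓ, (Pl ℓ).IsSymm)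
    (fa : EuclideanSpace ℝ (Fin n) → EuclideanSpace ℝ (Fin m) → EuclideanSpace ℝ (Fin n))
    (hfa : Differentiable ℝ
      (fun p : EuclideanSpace ℝ (Fin n) × EuclideanSpace ℝ (Fin m) => fa p.1 p.2))
    (ℒx ℒu L₁ L₂ L₃ Lhx Lhu : ℝ)
    (hℒx : 0 ≤ ℒx) (hℒu : 0 ≤ ℒu) (hL₁ : 0 ≤ L₁) (hL₂ : 0 ≤ L₂) (hL₃ : 0 ≤ L₃)
    (hLhx : 0 ≤ Lhx) (hLhu : 0 ≤ Lhu)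
    (hbound : ∀ x u, ‖x‖ ≤ ℒx → ‖u‖ ≤ ℒu → ‖fa x u‖ ≤ L₁ * ‖x‖ + L₂ * ‖u‖ + L₃)
    (hdx : ∀ x u, ‖x‖ ≤ ℒx → ‖u‖ ≤ ℒu → ‖fderiv ℝ (fun x' => fa x' u) x‖ ≤ Lhx)
    (hdu : ∀ x u, ‖x‖ ≤ ℒx → ‖u‖ ≤ ℒu → ‖fderiv ℝ (fun u' => fa x u') u‖ ≤ Lhu)
    (g : EuclideanSpace ℝ (Fin n) → EuclideanSpace ℝ (Fin m) → ℝ)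
    (hg : ∀ x u, g x u =
      ⟪fa x u, (Matrix.toEuclideanCLM (𝕜 := ℝ) P) (fa x u)⟫ +
        (∑ ℓ : Fin m, (u ℓ - ⟪x, (Matrix.toEuclideanCLM (𝕜 := ℝ) (Pl ℓ)) x⟫)) -
        ⟪x, (Matrix.toEuclideanCLM (𝕜 := ℝ) P) x⟫)
    (Lx Lu : ℝ)
    (hLx : Lx = 2 * ‖Matrix.toEuclideanCLM (𝕜 := ℝ) P‖ * Lhx * (L₁ * ℒx + L₂ * ℒu + L₃) +
      2 * ℒx * ‖Matrix.toEuclideanCLM (𝕜 := ℝ) P‖ +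
      2 * ℒx * ∑ ℓ : Fin m, ‖Matrix.toEuclideanCLM (𝕜 := ℝ) (Pl ℓ)‖)
    (hLu : Lu = 2 * ‖Matrix.toEuclideanCLM (𝕜 := ℝ) P‖ * Lhu * (L₁ * ℒx + L₂ * ℒu + L₃) +
      Real.sqrt m) :
    ∀ x x' : EuclideanSpace ℝ (Fin n), ∀ u u' : EuclideanSpace ℝ (Fin m),
      ‖x‖ ≤ ℒx → ‖x'‖ ≤ ℒx → ‖u‖ ≤ ℒu → ‖u'‖ ≤ ℒu →
        |g x u - g x' u'| ≤
          Real.sqrt (Lx ^ 2 + Lu ^ 2) *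
            Real.sqrt (‖x - x'‖ ^ 2 + ‖u - u'‖ ^ 2) := by
  intro x x' u u' hx hx' hu hu'
  set T := Matrix.toEuclideanCLM (𝕜 := ℝ) P with hT
  set M := L₁ * ℒx + L₂ * ℒu + L₃ with hM
  set Sl := ∑ ℓ : Fin m, ‖Matrix.toEuclideanCLM (𝕜 := ℝ) (Pl ℓ)‖ with hSl
  have hM0 : 0 ≤ M := by
    have := mul_nonneg hL₁ hℒx
    have := mul_nonneg hL₂ hℒu
    positivity
  set a := ‖x - x'‖ with ha
  set b := ‖u - u'‖ with hb
  have ha0 : 0 ≤ a := norm_nonneg _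
  have hb0 : 0 ≤ b := norm_nonneg _
  -- bounds on fa
  have hfb : ∀ (y : EuclideanSpace ℝ (Fin n)) (v : EuclideanSpace ℝ (Fin m)),
      ‖y‖ ≤ ℒx → ‖v‖ ≤ ℒu → ‖fa y v‖ ≤ M := by
    intro y v hy hv
    have := hbound y v hy hv
    have h1 : L₁ * ‖y‖ ≤ L₁ * ℒx := mul_le_mul_of_nonneg_left hy hL₁
    have h2 : L₂ * ‖v‖ ≤ L₂ * ℒu := mul_le_mul_of_nonneg_left hv hL₂
    rw [hM]; linarith
  -- Lipschitz bound on fa via the mean value inequality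
  have hfax : ‖fa x u - fa x' u‖ ≤ Lhx * a := by
    have hdiff : Differentiable ℝ (fun x' => fa x' u) := fun y =>
      by have h := (hfa (y, u)).comp y ((differentiableAt_id (𝕜 := ℝ) (x := y)).prodMk (differentiableAt_const u)); exact h
    exact (convex_closedBall (0 : EuclideanSpace ℝ (Fin n)) ℒx).norm_image_sub_le_of_norm_fderiv_le
      (fun y _ => hdiff y)
      (fun y hy => hdx y u (by simpa using mem_closedBall_zero_iff.mp hy) hu)
      (mem_closedBall_zero_iff.mpr hx') (mem_closedBall_zero_iff.mpr hx)
  have hfau : ‖fa x' u - fa x' u'‖ ≤ Lhu * b := by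
    have hdiff : Differentiable ℝ (fun u' => fa x' u') := fun v =>
      (hfa (x', v)).comp v ((differentiableAt_const x').prodMk differentiableAt_id)
    exact (convex_closedBall (0 : EuclideanSpace ℝ (Fin m)) ℒu).norm_image_sub_le_of_norm_fderiv_le
      (fun v _ => hdiff v)
      (fun v hv => hdu x' v hx' (by simpa using mem_closedBall_zero_iff.mp hv))
      (mem_closedBall_zero_iff.mpr hu') (mem_closedBall_zero_iff.mpr hu)
  have hfd : ‖fa x u - fa x' u'‖ ≤ Lhx * a + Lhu * b := by
    calc ‖fa x u - fa x' u'‖ = ‖(fa x u - fa x' u) + (fa x' u - fa x' u')‖ := by abel_nf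
      _ ≤ ‖fa x u - fa x' u‖ + ‖fa x' u - fa x' u'‖ := norm_add_le _ _
      _ ≤ Lhx * a + Lhu * b := add_le_add hfax hfau
  -- Term A
  have hsymT : ∀ v w, ⟪T v, w⟫ = ⟪v, T w⟫ := clm_symm P hP
  have hA : |⟪fa x u, T (fa x u)⟫ - ⟪fa x' u', T (fa x' u')⟫| ≤
      ‖T‖ * (2 * M) * (Lhx * a + Lhu * b) :=
    quad_diff_bound T hsymT _ _ M _ (hfb x u hx hu) (hfb x' u' hx' hu') hfd
  -- Term B
  have hB : |∑ ℓ, (u ℓ - u' ℓ)| ≤ Real.sqrt m * b := by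
    have := sum_abs_le (u - u')
    simpa using this
  -- Term C
  have hC : |(∑ ℓ, ⟪x, Matrix.toEuclideanCLM (𝕜 := ℝ) (Pl ℓ) x⟫) - ∑ ℓ, ⟪x', Matrix.toEuclideanCLM (𝕜 := ℝ) (Pl ℓ) x'⟫| ≤ Sl * (2 * ℒx) * a := by
    rw [← Finset.sum_sub_distrib]
    calc |∑ ℓ, (⟪x, Matrix.toEuclideanCLM (𝕜 := ℝ) (Pl ℓ) x⟫ - ⟪x', Matrix.toEuclideanCLM (𝕜 := ℝ) (Pl ℓ) x'⟫)| ≤ ∑ ℓ, |⟪x, Matrix.toEuclideanCLM (𝕜 := ℝ) (Pl ℓ) x⟫ - ⟪x', Matrix.toEuclideanCLM (𝕜 := ℝ) (Pl ℓ) x'⟫| :=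
          Finset.abs_sum_le_sum_abs _ _
      _ ≤ ∑ ℓ, ‖Matrix.toEuclideanCLM (𝕜 := ℝ) (Pl ℓ)‖ * (2 * ℒx) * a := by
          refine Finset.sum_le_sum fun ℓ _ => ?_
          exact quad_diff_bound (Matrix.toEuclideanCLM (𝕜 := ℝ) (Pl ℓ)) (clm_symm (Pl ℓ) (hPl ℓ)) x x' ℒx a hx hx' le_rfl
      _ = Sl * (2 * ℒx) * a := by rw [hSl, ← Finset.sum_mul, ← Finset.sum_mul]
  -- Term D
  have hD : |⟪x, T x⟫ - ⟪x', T x'⟫| ≤ ‖T‖ * (2 * ℒx) * a :=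
    quad_diff_bound T hsymT x x' ℒx a hx hx' le_rfl
  -- assemble the Lipschitz bound
  have hsplit : g x u - g x' u' =
      (⟪fa x u, T (fa x u)⟫ - ⟪fa x' u', T (fa x' u')⟫) + (∑ ℓ, (u ℓ - u' ℓ))
      - ((∑ ℓ, ⟪x, Matrix.toEuclideanCLM (𝕜 := ℝ) (Pl ℓ) x⟫) - ∑ ℓ, ⟪x', Matrix.toEuclideanCLM (𝕜 := ℝ) (Pl ℓ) x'⟫) - (⟪x, T x⟫ - ⟪x', T x'⟫) := by
    rw [hg, hg]
    simp only [Finset.sum_sub_distrib]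
    ring
  have hkey : |g x u - g x' u'| ≤ Lx * a + Lu * b := by
    rw [hsplit, hLx, hLu]
    have habs : |(⟪fa x u, T (fa x u)⟫ - ⟪fa x' u', T (fa x' u')⟫) + (∑ ℓ, (u ℓ - u' ℓ))
        - ((∑ ℓ, ⟪x, Matrix.toEuclideanCLM (𝕜 := ℝ) (Pl ℓ) x⟫) - ∑ ℓ, ⟪x', Matrix.toEuclideanCLM (𝕜 := ℝ) (Pl ℓ) x'⟫) - (⟪x, T x⟫ - ⟪x', T x'⟫)| ≤
        |⟪fa x u, T (fa x u)⟫ - ⟪fa x' u', T (fa x' u')⟫| + |∑ ℓ, (u ℓ - u' ℓ)|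
        + |(∑ ℓ, ⟪x, Matrix.toEuclideanCLM (𝕜 := ℝ) (Pl ℓ) x⟫) - ∑ ℓ, ⟪x', Matrix.toEuclideanCLM (𝕜 := ℝ) (Pl ℓ) x'⟫| + |⟪x, T x⟫ - ⟪x', T x'⟫| := by
      calc _ ≤ |(⟪fa x u, T (fa x u)⟫ - ⟪fa x' u', T (fa x' u')⟫) + (∑ ℓ, (u ℓ - u' ℓ))
            - ((∑ ℓ, ⟪x, Matrix.toEuclideanCLM (𝕜 := ℝ) (Pl ℓ) x⟫) - ∑ ℓ, ⟪x', Matrix.toEuclideanCLM (𝕜 := ℝ) (Pl ℓ) x'⟫)| + |⟪x, T x⟫ - ⟪x', T x'⟫| :=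
            abs_sub _ _
        _ ≤ |(⟪fa x u, T (fa x u)⟫ - ⟪fa x' u', T (fa x' u')⟫) + (∑ ℓ, (u ℓ - u' ℓ))|
            + |(∑ ℓ, ⟪x, Matrix.toEuclideanCLM (𝕜 := ℝ) (Pl ℓ) x⟫) - ∑ ℓ, ⟪x', Matrix.toEuclideanCLM (𝕜 := ℝ) (Pl ℓ) x'⟫| + |⟪x, T x⟫ - ⟪x', T x'⟫| := by
            have := abs_sub ((⟪fa x u, T (fa x u)⟫ - ⟪fa x' u', T (fa x' u')⟫)
              + (∑ ℓ, (u ℓ - u' ℓ))) ((∑ ℓ, ⟪x, Matrix.toEuclideanCLM (𝕜 := ℝ) (Pl ℓ) x⟫) - ∑ ℓ, ⟪x', Matrix.toEuclideanCLM (𝕜 := ℝ) (Pl ℓ) x'⟫)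
            linarith
        _ ≤ _ := by
            have := abs_add_le (⟪fa x u, T (fa x u)⟫ - ⟪fa x' u', T (fa x' u')⟫)
              (∑ ℓ, (u ℓ - u' ℓ))
            linarith
    have hexp : ‖T‖ * (2 * M) * (Lhx * a + Lhu * b) + Real.sqrt m * b
        + Sl * (2 * ℒx) * a + ‖T‖ * (2 * ℒx) * a =
        (2 * ‖T‖ * Lhx * M + 2 * ℒx * ‖T‖ + 2 * ℒx * Sl) * a
        + (2 * ‖T‖ * Lhu * M + Real.sqrt m) * b := by ring
    linarith [habs, hA, hB, hC, hD, hexp]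
  -- Cauchy–Schwarz on (Lx, Lu) · (a, b)
  have hSl0 : 0 ≤ Sl := by
    rw [hSl]; exact Finset.sum_nonneg fun ℓ _ => norm_nonneg _
  have hLx0 : 0 ≤ Lx := by
    rw [hLx]
    have h1 : 0 ≤ 2 * ‖T‖ * Lhx * M :=
      mul_nonneg (mul_nonneg (mul_nonneg (by norm_num) (norm_nonneg T)) hLhx) hM0
    have h2 : 0 ≤ 2 * ℒx * ‖T‖ := by positivity
    have h3 : 0 ≤ 2 * ℒx * Sl := mul_nonneg (by positivity) hSl0
    linarith
  have hLu0 : 0 ≤ Lu := by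
    rw [hLu]
    have h1 : 0 ≤ 2 * ‖T‖ * Lhu * M :=
      mul_nonneg (mul_nonneg (mul_nonneg (by norm_num) (norm_nonneg T)) hLhu) hM0
    have h2 : 0 ≤ Real.sqrt m := Real.sqrt_nonneg _
    linarith
  exact le_trans hkey (cs_aux Lx Lu a b hLx0 hLu0 ha0 hb0)
end

section
/- Let k ∈ ℕ, let w be a real random variable on a probability space such that w^ι is integrable for every 0 ≤ ι ≤ 2k, let a ∈ ℝ, and let b_0, b_1, …, b_k ∈ ℝ. Define g_j := Σ_{ι=j}^{k} b_ι · C(ι, j) · a^{ι−j} for 1 ≤ j ≤ k, where C(ι, j) is the binomial coefficient. Then the variance of the random variable Σ_{ι=0}^{k} b_ι (a + w)^ι equals Σ_{j=1}^{k} Σ_{z=1}^{k} g_j · g_z · (E[w^{j+z}] − E[w^j] · E[w^z]). -/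
open MeasureTheory ProbabilityTheory

/-- Variance of a polynomial barrier certificate at the next state of a one-dimensional
system with additive noise: with `g_j = Σ_{ι=j}^{k} b_ι C(ι,j) a^{ι-j}`,
`Var(Σ_{ι=0}^{k} b_ι (a + w)^ι) = Σ_{j=1}^{k} Σ_{z=1}^{k} g_j g_z (E[w^{j+z}] - E[w^j]E[w^z])`. -/
theorem variance_polynomial_additive_noise {Ω : Type*} [MeasurableSpace Ω]
    (μ : Measure Ω) [IsProbabilityMeasure μ]
    (k : ℕ) (w : Ω → ℝ) (hw : Measurable w)
    (hInt : ∀ ι ≤ 2 * k, Integrable (fun ω => w ω ^ ι) μ)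
    (a : ℝ) (b : ℕ → ℝ)
    (g : ℕ → ℝ)
    (hg : ∀ j, g j = ∑ ι ∈ Finset.Icc j k, b ι * (ι.choose j : ℝ) * a ^ (ι - j)) :
    variance (fun ω => ∑ ι ∈ Finset.range (k + 1), b ι * (a + w ω) ^ ι) μ =
      ∑ j ∈ Finset.Icc 1 k, ∑ z ∈ Finset.Icc 1 k,
        g j * g z *
          ((∫ ω, w ω ^ (j + z) ∂μ) - (∫ ω, w ω ^ j ∂μ) * (∫ ω, w ω ^ z ∂μ)) := by
  -- rewrite the polynomial as a sum in powers of w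
  have hpoint : ∀ ω, (∑ ι ∈ Finset.range (k + 1), b ι * (a + w ω) ^ ι)
      = ∑ j ∈ Finset.range (k + 1), g j * w ω ^ j := by
    intro ω
    have : ∀ ι, (a + w ω) ^ ι = ∑ j ∈ Finset.range (ι + 1),
        w ω ^ j * a ^ (ι - j) * (ι.choose j : ℝ) := fun ι => by
      rw [add_comm]; exact add_pow (w ω) a ι
    simp_rw [this, Finset.mul_sum]
    rw [Finset.sum_comm' (t' := Finset.range (k + 1)) (s' := fun j => Finset.Icc j k)]
    · refine Finset.sum_congr rfl fun j hj => ?_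
      rw [hg j, Finset.sum_mul]
      exact Finset.sum_congr rfl fun ι hι => by ring
    · intro ι j
      simp only [Finset.mem_range, Finset.mem_Icc]
      omega
  -- integrability facts
  have hIj : ∀ j ∈ Finset.range (k + 1), Integrable (fun ω => g j * w ω ^ j) μ :=
    fun j hj => ((hInt j (by simp at hj; omega)).const_mul _)
  have hX : Integrable (fun ω => ∑ j ∈ Finset.range (k + 1), g j * w ω ^ j) μ :=
    integrable_finset_sum _ hIj
  have hsq : ∀ ω, (∑ j ∈ Finset.range (k + 1), g j * w ω ^ j) ^ 2
      = ∑ j ∈ Finset.range (k + 1), ∑ z ∈ Finset.range (k + 1),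
          g j * g z * w ω ^ (j + z) := by
    intro ω
    rw [sq, Finset.sum_mul_sum]
    exact Finset.sum_congr rfl fun j hj => Finset.sum_congr rfl fun z hz => by
      rw [pow_add]; ring
  have hIsq : Integrable (fun ω => (∑ j ∈ Finset.range (k + 1), g j * w ω ^ j) ^ 2) μ := by
    simp_rw [hsq]
    refine integrable_finset_sum _ fun j hj => integrable_finset_sum _ fun z hz => ?_
    simp only [Finset.mem_range] at hj hz
    exact (hInt (j + z) (by omega)).const_mul _
  have hmem : MemLp (fun ω => ∑ j ∈ Finset.range (k + 1), g j * w ω ^ j) 2 μ := by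
    refine (memLp_two_iff_integrable_sq ?_).2 hIsq
    exact (Finset.aestronglyMeasurable_fun_sum _ fun j hj =>
      ((hw.pow_const j).const_mul _).aestronglyMeasurable)
  have hXfun : (fun ω => ∑ ι ∈ Finset.range (k + 1), b ι * (a + w ω) ^ ι)
      = fun ω => ∑ j ∈ Finset.range (k + 1), g j * w ω ^ j := funext hpoint
  rw [hXfun, variance_eq_sub hmem]
  have hEX : (∫ ω, ∑ j ∈ Finset.range (k + 1), g j * w ω ^ j ∂μ)
      = ∑ j ∈ Finset.range (k + 1), g j * ∫ ω, w ω ^ j ∂μ := by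
    rw [integral_finset_sum _ hIj]
    exact Finset.sum_congr rfl fun j hj => integral_const_mul _ _
  have hEX2 : (∫ ω, (∑ j ∈ Finset.range (k + 1), g j * w ω ^ j) ^ 2 ∂μ)
      = ∑ j ∈ Finset.range (k + 1), ∑ z ∈ Finset.range (k + 1),
          g j * g z * ∫ ω, w ω ^ (j + z) ∂μ := by
    simp_rw [hsq]
    rw [integral_finset_sum _ fun j hj => integrable_finset_sum _ fun z hz =>
      (hInt (j + z) (by simp only [Finset.mem_range] at hj hz; omega)).const_mul _]
    refine Finset.sum_congr rfl fun j hj => ?_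
    rw [integral_finset_sum _ fun z hz =>
      (hInt (j + z) (by simp only [Finset.mem_range] at hj hz; omega)).const_mul _]
    exact Finset.sum_congr rfl fun z hz => integral_const_mul _ _
  simp only [Pi.pow_apply]
  rw [hEX2, hEX]
  have hm0 : (∫ ω, w ω ^ 0 ∂μ) = 1 := by simp
  -- turn (Σ g_j m_j)^2 into a double sum, combine, then restrict to Icc 1 k
  rw [sq, Finset.sum_mul_sum, ← Finset.sum_sub_distrib]
  have hcongr : ∀ j ∈ Finset.range (k + 1),
      ((∑ z ∈ Finset.range (k + 1), g j * g z * ∫ ω, w ω ^ (j + z) ∂μ) -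
        ∑ z ∈ Finset.range (k + 1), (g j * ∫ ω, w ω ^ j ∂μ) * (g z * ∫ ω, w ω ^ z ∂μ))
      = ∑ z ∈ Finset.range (k + 1),
          g j * g z * ((∫ ω, w ω ^ (j + z) ∂μ) - (∫ ω, w ω ^ j ∂μ) * ∫ ω, w ω ^ z ∂μ) := by
    intro j hj
    rw [← Finset.sum_sub_distrib]
    exact Finset.sum_congr rfl fun z hz => by ring
  rw [Finset.sum_congr rfl hcongr]
  symm
  refine Finset.sum_subset (fun j hj => by simp only [Finset.mem_Icc, Finset.mem_range] at *; omega)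
    (fun j hj hj' => ?_) |>.trans (Finset.sum_congr rfl fun j hj => ?_)
  · have : j = 0 := by simp only [Finset.mem_Icc, Finset.mem_range] at hj hj'; omega
    subst this
    refine Finset.sum_eq_zero fun z hz => ?_
    simp [hm0]
  · refine Finset.sum_subset
      (fun z hz => by simp only [Finset.mem_Icc, Finset.mem_range] at *; omega)
      (fun z hz hz' => ?_)
    have : z = 0 := by simp only [Finset.mem_Icc, Finset.mem_range] at hz hz'; omega
    subst this
    simp [hm0]
end
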